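/- Let l > 0, let D = diag(d₁, d₂) be a real diagonal 2×2 matrix with d₁, d₂ > 0, let A and B be complex 2×2 matrices, and let λ ∈ ℂ. Then the following are equivalent: (i) there exists a twice continuously differentiable function y : [0, lπ] → ℂ², not identically zero, with y'(0) = y'(lπ) = 0 and λ·y(x) = D·y''(x) + A·y(x) + e^{-λ}·B·y(x) for all x ∈ [0, lπ]; (ii) there exists a nonnegative integer n such that det( λ·I + (n²/l²)·D − A − e^{-λ}·B ) = 0. -/

import Mathlib

open Real Set Matrix Complex

/-!
Dividing by `D`, a solution satisfies `y'' = C y` with `C = D⁻¹ (λ - A - e^{-λ} B)`, and the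
matrix of the theorem is `D (C + n²/l²)`. By Cayley–Hamilton, `∏ (C - μ)` over the eigenvalues `μ`
of `C` annihilates `y`. Peeling off one factor `C - μ` at a time, `w = T y` (with `T` the product
of the remaining factors) solves the scalar Neumann problem `w'' = μ w`. By uniqueness for the ODE,
`w x = cos (ω x) • w 0` with `ω² = -μ`, and `w' (lπ) = 0` forces `w = 0` unless `ω l ∈ ℤ`, that is,
unless `μ = -n²/l²`. Conversely `cos (n x / l) • v` is a solution for `v` in the kernel of the
matrix of the theorem.
-/

theorem hasDerivAt_ccos_mul (ω : ℂ) (x : ℝ) :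
    HasDerivAt (fun t : ℝ => cos (ω * t)) (-(ω * sin (ω * x))) x := by
  simpa [mul_comm] using (((hasDerivAt_id (x : ℂ)).const_mul ω).ccos).comp_ofReal

theorem hasDerivAt_neg_mul_csin_mul (ω : ℂ) (x : ℝ) :
    HasDerivAt (fun t : ℝ => -(ω * sin (ω * t))) (-(ω ^ 2 * cos (ω * x))) x := by
  have hsin : HasDerivAt (fun t : ℝ => sin (ω * t)) (ω * cos (ω * x)) x := by
    simpa [mul_comm] using (((hasDerivAt_id (x : ℂ)).const_mul ω).csin).comp_ofReal
  exact (hsin.const_mul ω).fun_neg.congr_deriv (by ring)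

theorem eq_natCast_div_sq_of_sin_mul_eq_zero {l : ℝ} (hl : l ≠ 0) {ω : ℂ}
    (h : sin (ω * (l * π : ℝ)) = 0) : ∃ n : ℕ, ω ^ 2 = (n : ℂ) ^ 2 / (l : ℂ) ^ 2 := by
  obtain ⟨k, hk⟩ := Complex.sin_eq_zero_iff.mp h
  have hl' : (l : ℂ) ≠ 0 := ofReal_ne_zero.mpr hl
  have hπ : (π : ℂ) ≠ 0 := ofReal_ne_zero.mpr pi_ne_zero
  have hk2 : ((k.natAbs : ℕ) : ℂ) ^ 2 = (k : ℂ) ^ 2 := by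
    rw [← Int.cast_natCast, ← Int.cast_pow, Int.natAbs_sq, Int.cast_pow]
  refine ⟨k.natAbs, ?_⟩
  rw [hk2, eq_div_iff (pow_ne_zero 2 hl'), ← mul_pow]
  push_cast at hk
  congr 1
  apply mul_right_cancel₀ hπ
  linear_combination hk

section SecondOrder

variable {E : Type*} [NormedAddCommGroup E] [NormedSpace ℂ E]

theorem contDiff_ccos_mul_smul (ω : ℂ) (v : E) : ContDiff ℝ 2 fun t : ℝ => cos (ω * t) • v :=
  ((Complex.contDiff_cos.restrict_scalars ℝ).comp (contDiff_const.mul ofRealCLM.contDiff)).smul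
    contDiff_const

theorem deriv_ccos_mul_smul (ω : ℂ) (v : E) :
    deriv (fun t : ℝ => cos (ω * t) • v) = fun x : ℝ => (-(ω * sin (ω * x))) • v :=
  funext fun x => ((hasDerivAt_ccos_mul ω x).smul_const v).deriv

theorem deriv_deriv_ccos_mul_smul (ω : ℂ) (v : E) :
    deriv (deriv fun t : ℝ => cos (ω * t) • v) = fun x : ℝ => (-(ω ^ 2 * cos (ω * x))) • v := by
  rw [deriv_ccos_mul_smul]
  exact funext fun x => ((hasDerivAt_neg_mul_csin_mul ω x).smul_const v).deriv

theorem eqOn_of_hasDerivAt_of_hasDerivAt_smul {μ : ℂ} {L : ℝ} {f f' g g' : ℝ → E}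
    (hf : ∀ x ∈ Icc 0 L, HasDerivAt f (f' x) x) (hf' : ∀ x ∈ Icc 0 L, HasDerivAt f' (μ • f x) x)
    (hg : ∀ x ∈ Icc 0 L, HasDerivAt g (g' x) x) (hg' : ∀ x ∈ Icc 0 L, HasDerivAt g' (μ • g x) x)
    (h0 : f 0 = g 0) (h0' : f' 0 = g' 0) :
    EqOn (fun x => (f x, f' x)) (fun x => (g x, g' x)) (Icc 0 L) := by
  have hv : LipschitzWith (max 1 ‖μ‖₊) fun p : E × E => (p.2, μ • p.1) :=
    LipschitzWith.prod_snd.prodMk ((lipschitzWith_smul μ).comp LipschitzWith.prod_fst |>.weaken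
      (by simp))
  refine ODE_solution_unique (v := fun _ p => (p.2, μ • p.1)) (fun _ => hv) ?_ ?_ ?_ ?_
    (Prod.ext h0 h0')
  · exact fun x hx => ((hf x hx).continuousAt.prodMk (hf' x hx).continuousAt).continuousWithinAt
  · exact fun x hx => ((hf x (Ico_subset_Icc_self hx)).prodMk
      (hf' x (Ico_subset_Icc_self hx))).hasDerivWithinAt
  · exact fun x hx => ((hg x hx).continuousAt.prodMk (hg' x hx).continuousAt).continuousWithinAt
  · exact fun x hx => ((hg x (Ico_subset_Icc_self hx)).prodMk
      (hg' x (Ico_subset_Icc_self hx))).hasDerivWithinAt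

end SecondOrder

structure IsNeumannSolution {E : Type*} [NormedAddCommGroup E] [NormedSpace ℝ E]
    (L : ℝ) (F : E → E) (y y' : ℝ → E) : Prop where
  hasDerivAt : ∀ x ∈ Icc 0 L, HasDerivAt y (y' x) x
  hasDerivAt_deriv : ∀ x ∈ Icc 0 L, HasDerivAt y' (F (y x)) x
  deriv_left : y' 0 = 0
  deriv_right : y' L = 0

theorem ContDiff.isNeumannSolution {E : Type*} [NormedAddCommGroup E] [NormedSpace ℝ E] {L : ℝ}
    {F : E → E} {y : ℝ → E} (hy : ContDiff ℝ 2 y) (h0 : deriv y 0 = 0) (hL : deriv y L = 0)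
    (heq : ∀ x ∈ Icc 0 L, deriv (deriv y) x = F (y x)) : IsNeumannSolution L F y (deriv y) where
  hasDerivAt x _ := (hy.differentiable two_ne_zero x).hasDerivAt
  hasDerivAt_deriv x hx := heq x hx ▸ (hy.differentiable_deriv_two x).hasDerivAt
  deriv_left := h0
  deriv_right := hL

theorem HasDerivAt.matrix_mulVec {m n : Type*} [Fintype n] {y : ℝ → n → ℂ} {y' : n → ℂ} {x : ℝ}
    (P : Matrix m n ℂ) (h : HasDerivAt y y' x) : HasDerivAt (fun t => P *ᵥ y t) (P *ᵥ y') x :=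
  hasDerivAt_pi.mpr fun i => HasDerivAt.fun_sum fun j _ => (hasDerivAt_pi.mp h j).const_mul (P i j)

namespace IsNeumannSolution

theorem eqOn_zero_of_smul {E : Type*} [NormedAddCommGroup E] [NormedSpace ℂ E] {l : ℝ}
    (hl : 0 < l) {μ : ℂ} (hμ : ∀ n : ℕ, μ + (n : ℂ) ^ 2 / (l : ℂ) ^ 2 ≠ 0) {g g' : ℝ → E}
    (h : IsNeumannSolution (l * π) (μ • ·) g g') : EqOn g 0 (Icc 0 (l * π)) := by
  obtain ⟨ω, hω⟩ := IsAlgClosed.exists_pow_nat_eq (-μ) two_pos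
  have hcos : ∀ x ∈ Icc 0 (l * π), HasDerivAt (fun t : ℝ => cos (ω * t) • g 0)
      ((-(ω * sin (ω * x))) • g 0) x := fun x _ => (hasDerivAt_ccos_mul ω x).smul_const _
  have hcos' : ∀ x ∈ Icc 0 (l * π), HasDerivAt (fun t : ℝ => (-(ω * sin (ω * t))) • g 0)
      (μ • cos (ω * x) • g 0) x := fun x _ =>
    ((hasDerivAt_neg_mul_csin_mul ω x).smul_const (g 0)).congr_deriv (by
      rw [hω, smul_smul, neg_mul, neg_neg])
  have heq := eqOn_of_hasDerivAt_of_hasDerivAt_smul h.hasDerivAt h.hasDerivAt_deriv hcos hcos'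
    (by simp) (by simp [h.deriv_left])
  have hL : l * π ∈ Icc 0 (l * π) := right_mem_Icc.mpr (by positivity)
  have hg'L : (-(ω * sin (ω * (l * π : ℝ)))) • g 0 = 0 := by
    rw [← h.deriv_right]
    exact (congrArg Prod.snd (heq hL)).symm
  rcases smul_eq_zero.mp hg'L with hω0 | hg0
  · exfalso
    rcases mul_eq_zero.mp (neg_eq_zero.mp hω0) with hω0 | hsin0
    · exact hμ 0 (by simp [← neg_eq_zero, ← hω, hω0])
    · obtain ⟨n, hn⟩ := eq_natCast_div_sq_of_sin_mul_eq_zero hl.ne' hsin0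
      exact hμ n (by rw [← hn, hω]; ring)
  · intro x hx
    simpa [hg0] using congrArg Prod.fst (heq hx)

variable {ι : Type*} [Fintype ι] {C : Matrix ι ι ℂ} {y y' : ℝ → ι → ℂ}

theorem mulVec {L : ℝ} (h : IsNeumannSolution L (C *ᵥ ·) y y') {P : Matrix ι ι ℂ}
    (hP : Commute P C) :
    IsNeumannSolution L (C *ᵥ ·) (fun x => P *ᵥ y x) (fun x => P *ᵥ y' x) where
  hasDerivAt x hx := (h.hasDerivAt x hx).matrix_mulVec P
  hasDerivAt_deriv x hx := by
    simpa only [mulVec_mulVec, hP.eq] using (h.hasDerivAt_deriv x hx).matrix_mulVec P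
  deriv_left := by simp [h.deriv_left]
  deriv_right := by simp [h.deriv_right]

variable [DecidableEq ι]

theorem eqOn_zero_of_aeval_prod {l : ℝ} (hl : 0 < l)
    (h : IsNeumannSolution (l * π) (C *ᵥ ·) y y') (s : Multiset ℂ)
    (hs : ∀ μ ∈ s, ∀ n : ℕ, μ + (n : ℂ) ^ 2 / (l : ℂ) ^ 2 ≠ 0)
    (hy : ∀ x ∈ Icc 0 (l * π),
      Polynomial.aeval C (s.map fun μ => Polynomial.X - Polynomial.C μ).prod *ᵥ y x = 0) :
    EqOn y 0 (Icc 0 (l * π)) := by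
  induction s using Multiset.induction_on with
  | empty => exact fun x hx => by simpa using hy x hx
  | cons μ t ih =>
    set p : Polynomial ℂ := (t.map fun μ => Polynomial.X - Polynomial.C μ).prod
    set T := Polynomial.aeval C p
    have hT : Commute T C := by
      simpa using (Commute.all p Polynomial.X).map (Polynomial.aeval C)
    have hTy := h.mulVec hT
    have hw : IsNeumannSolution (l * π) (μ • ·) (fun x => T *ᵥ y x) (fun x => T *ᵥ y' x) :=
      { hTy with
        hasDerivAt_deriv := fun x hx => (hTy.hasDerivAt_deriv x hx).congr_deriv <| by
          have hCT := hy x hx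
          simp only [Multiset.map_cons, Multiset.prod_cons, map_mul, map_sub, Polynomial.aeval_X,
            Polynomial.aeval_C, Algebra.algebraMap_eq_smul_one, ← mulVec_mulVec, sub_mulVec,
            smul_mulVec, one_mulVec] at hCT
          exact sub_eq_zero.mp hCT }
    exact ih (fun ν hν => hs ν (Multiset.mem_cons_of_mem hν))
      (fun x hx => hw.eqOn_zero_of_smul hl (hs μ (Multiset.mem_cons_self μ t)) hx)

theorem eqOn_zero {l : ℝ} (hl : 0 < l)
    (hC : ∀ n : ℕ, (C + ((n : ℂ) ^ 2 / (l : ℂ) ^ 2) • (1 : Matrix ι ι ℂ)).det ≠ 0)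
    (h : IsNeumannSolution (l * π) (C *ᵥ ·) y y') : EqOn y 0 (Icc 0 (l * π)) := by
  refine h.eqOn_zero_of_aeval_prod hl C.charpoly.roots ?_ fun x _ => ?_
  · intro μ hμ n hμn
    have hroot := (Polynomial.mem_roots C.charpoly_monic.ne_zero).mp hμ
    rw [Polynomial.IsRoot, eval_charpoly, eq_neg_of_add_eq_zero_left hμn, scalar_apply,
      ← smul_one_eq_diagonal, neg_smul, ← neg_add', det_neg, add_comm] at hroot
    exact hC n (by simpa using hroot)
  · rw [Polynomial.prod_multiset_X_sub_C_of_monic_of_roots_card_eq C.charpoly_monic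
      IsAlgClosed.card_roots_eq_natDegree, aeval_self_charpoly, zero_mulVec]

end IsNeumannSolution

/-- `λ` is a characteristic value of the linearized delayed reaction–diffusion system
(i.e. the boundary value problem `λ y = D y'' + A y + e^{-λ} B y`, `y'(0) = y'(lπ) = 0`
has a nonzero solution) iff `det(λ I + (n²/l²) D − A − e^{-λ} B) = 0` for some `n : ℕ`. -/
theorem stmt_2 (l : ℝ) (hl : 0 < l) (d₁ d₂ : ℝ) (hd₁ : 0 < d₁) (hd₂ : 0 < d₂)
    (A B : Matrix (Fin 2) (Fin 2) ℂ) (lam : ℂ)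
    (D : Matrix (Fin 2) (Fin 2) ℂ) (hD : D = Matrix.diagonal ![(d₁ : ℂ), (d₂ : ℂ)]) :
    (∃ y : ℝ → (Fin 2 → ℂ), ContDiff ℝ 2 y ∧
        (∃ x ∈ Icc (0 : ℝ) (l * π), y x ≠ 0) ∧
        deriv y 0 = 0 ∧ deriv y (l * π) = 0 ∧
        (∀ x ∈ Icc (0 : ℝ) (l * π),
          lam • y x = D.mulVec (deriv (deriv y) x) + A.mulVec (y x)
            + Complex.exp (-lam) • B.mulVec (y x))) ↔
      (∃ n : ℕ, (lam • (1 : Matrix (Fin 2) (Fin 2) ℂ)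
        + (((n : ℂ) ^ 2 / (l : ℂ) ^ 2)) • D - A - Complex.exp (-lam) • B).det = 0) := by
  have hDdet : IsUnit D.det := by simp [hD, hd₁.ne', hd₂.ne']
  set M := lam • (1 : Matrix (Fin 2) (Fin 2) ℂ) - A - exp (-lam) • B
  have hM : ∀ c : ℂ, lam • 1 + c • D - A - exp (-lam) • B = D * (D⁻¹ * M + c • 1) := fun c => by
    rw [Matrix.mul_add, mul_nonsing_inv_cancel_left _ _ hDdet, Matrix.mul_smul, Matrix.mul_one]
    simp only [M]
    abel
  constructor
  · rintro ⟨y, hy, ⟨x₀, hx₀, hyx₀⟩, h0, hL, heq⟩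
    by_contra! hdet
    refine hyx₀ (IsNeumannSolution.eqOn_zero hl (C := D⁻¹ * M) (fun n hn => hdet n ?_)
      (hy.isNeumannSolution h0 hL fun x hx => ?_) hx₀)
    · rw [hM, det_mul, hn, mul_zero]
    · have hDy : D *ᵥ deriv (deriv y) x = M *ᵥ y x := by
        simp only [M, sub_mulVec, smul_mulVec, one_mulVec, heq x hx]
        abel
      rw [← mulVec_mulVec, ← hDy, mulVec_mulVec, nonsing_inv_mul _ hDdet, one_mulVec]
  · rintro ⟨n, hdet⟩
    obtain ⟨v, hv0, hv⟩ := exists_mulVec_eq_zero_iff.mpr hdet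
    refine ⟨fun x : ℝ => cos ((n / l : ℂ) * x) • v, contDiff_ccos_mul_smul _ v,
      ⟨0, left_mem_Icc.mpr (by positivity), by simpa using hv0⟩, ?_, ?_, fun x _ => ?_⟩
    · simp [deriv_ccos_mul_smul]
    · have hl' : (l : ℂ) ≠ 0 := ofReal_ne_zero.mpr hl.ne'
      have hnπ : (n / l : ℂ) * (l * π : ℝ) = n * π := by push_cast; field_simp
      simp only [deriv_ccos_mul_smul]
      rw [hnπ, Complex.sin_nat_mul_pi, mul_zero, neg_zero, zero_smul]
    · simp only [add_mulVec, sub_mulVec, smul_mulVec, one_mulVec] at hv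
      rw [deriv_deriv_ccos_mul_smul, mulVec_smul, mulVec_smul, mulVec_smul, div_pow]
      linear_combination (norm := module) cos ((n / l : ℂ) * x) • hv
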